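/- arXiv:2101.09051 — 7 statements merged into one kernel-verified Lean document; each statement's English description precedes it below -/
import Mathlib

section
/- Let α, β, γ, δ, ε, κ (=ϰ), λ, μ, ν be real numbers satisfying: μ > 0, α > 0, γ > 0, ε > 0, 3λ+2μ > 0, μγ − κ² > 0, αε − ν² > 0, (μ+α)(γ+ε) − (κ+ν)² > 0, and (3λ+2μ)(3β+2γ) − (3δ+2κ)² > 0. Then there exists a constant c₀ > 0, depending only on these parameters, such that for all matrices ξ, η ∈ M₃(ℝ): E(ξ,η) ≥ c₀ Σ_{p,q=1}^{3} (ξ_{pq}² + η_{pq}²), where E(ξ,η) := Σ_{p,q=1}^{3} [ (μ+α)ξ_{pq}² + (μ−α)ξ_{pq}ξ_{qp} + 2(κ+ν)ξ_{pq}η_{pq} + 2(κ−ν)ξ_{pq}η_{qp} + (γ+ε)η_{pq}² + (γ−ε)η_{pq}η_{qp} + 2δ ξ_{pp}η_{qq} + λ ξ_{pp}ξ_{qq} + β η_{pp}η_{qq} ]. -/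
lemma quadlb (a b c : ℝ) (ha : 0 < a) (hd : 0 < a*c - b^2) :
    ∃ m > 0, ∀ x y : ℝ, m*(x^2+y^2) ≤ a*x^2+2*b*x*y+c*y^2 := by
  have hc : 0 < c := by nlinarith [sq_nonneg b]
  have hac : (0:ℝ) < a + c := by linarith
  refine ⟨(a*c - b^2)/(a+c), div_pos hd hac, fun x y => ?_⟩
  rw [div_mul_eq_mul_div, div_le_iff₀ hac]
  nlinarith [sq_nonneg (a*x+b*y), sq_nonneg (b*x+c*y)]

/-- The potential energy density quadratic form of hemitropic elasticity,
with the strain tensor entries replaced by `ξ p q` and the torsion tensor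
entries replaced by `η p q`. -/
noncomputable def energyDensity (α β γ δ ε κ lam μ ν : ℝ)
    (ξ η : Matrix (Fin 3) (Fin 3) ℝ) : ℝ :=
  ∑ p : Fin 3, ∑ q : Fin 3,
    ((μ + α) * ξ p q ^ 2 + (μ - α) * ξ p q * ξ q p
      + 2 * (κ + ν) * ξ p q * η p q + 2 * (κ - ν) * ξ p q * η q p
      + (γ + ε) * η p q ^ 2 + (γ - ε) * η p q * η q p
      + 2 * δ * ξ p p * η q q + lam * ξ p p * ξ q q + β * η p p * η q q)

/-- Positive definiteness estimate (2.13) for the hemitropic energy density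
under the listed simultaneous inequalities on the material constants. -/
theorem energyDensity_pos_def (α β γ δ ε κ lam μ ν : ℝ)
    (hμ : 0 < μ) (hα : 0 < α) (hγ : 0 < γ) (hε : 0 < ε)
    (hlamμ : 0 < 3 * lam + 2 * μ)
    (hμγ : 0 < μ * γ - κ ^ 2) (hαε : 0 < α * ε - ν ^ 2)
    (hμαγε : 0 < (μ + α) * (γ + ε) - (κ + ν) ^ 2)
    (hlamβ : 0 < (3 * lam + 2 * μ) * (3 * β + 2 * γ) - (3 * δ + 2 * κ) ^ 2) :
    ∃ c₀ > 0, ∀ ξ η : Matrix (Fin 3) (Fin 3) ℝ,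
      energyDensity α β γ δ ε κ lam μ ν ξ η ≥
        c₀ * ∑ p : Fin 3, ∑ q : Fin 3, (ξ p q ^ 2 + η p q ^ 2) := by
  obtain ⟨m1, hm1, h1⟩ := quadlb μ κ γ hμ hμγ
  obtain ⟨m2, hm2, h2⟩ := quadlb α ν ε hα hαε
  obtain ⟨m3, hm3, h3⟩ := quadlb (lam + 2*μ/3) (δ + 2*κ/3) (β + 2*γ/3)
    (by linarith) (by nlinarith)
  refine ⟨min (min (2*m1) (2*m2)) (3*m3), by positivity, fun ξ η => ?_⟩
  set c₀ := min (min (2*m1) (2*m2)) (3*m3) with hc₀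
  have hc1 : c₀ ≤ 2*m1 := le_trans (min_le_left _ _) (min_le_left _ _)
  have hc2 : c₀ ≤ 2*m2 := le_trans (min_le_left _ _) (min_le_right _ _)
  have hc3 : c₀ ≤ 3*m3 := min_le_right _ _
  have step1 : ∀ x y : ℝ, c₀*(x^2+y^2) ≤ 2*(μ*x^2+2*κ*x*y+γ*y^2) := by
    intro x y
    have h := mul_le_mul_of_nonneg_right hc1 (by positivity : (0:ℝ) ≤ x^2+y^2)
    nlinarith [h1 x y]
  have step2 : ∀ x y : ℝ, c₀*(x^2+y^2) ≤ 2*(α*x^2+2*ν*x*y+ε*y^2) := by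
    intro x y
    have h := mul_le_mul_of_nonneg_right hc2 (by positivity : (0:ℝ) ≤ x^2+y^2)
    nlinarith [h2 x y]
  have step3 : ∀ x y : ℝ, c₀*(x^2+y^2) ≤
      3*((lam + 2*μ/3)*x^2+2*(δ + 2*κ/3)*x*y+(β + 2*γ/3)*y^2) := by
    intro x y
    have h := mul_le_mul_of_nonneg_right hc3 (by positivity : (0:ℝ) ≤ x^2+y^2)
    nlinarith [h3 x y]
  have H00 := step1 (ξ 0 0 - (ξ 0 0 + ξ 1 1 + ξ 2 2)/3) (η 0 0 - (η 0 0 + η 1 1 + η 2 2)/3)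
  have H11 := step1 (ξ 1 1 - (ξ 0 0 + ξ 1 1 + ξ 2 2)/3) (η 1 1 - (η 0 0 + η 1 1 + η 2 2)/3)
  have H22 := step1 (ξ 2 2 - (ξ 0 0 + ξ 1 1 + ξ 2 2)/3) (η 2 2 - (η 0 0 + η 1 1 + η 2 2)/3)
  have H01 := step1 ((ξ 0 1 + ξ 1 0)/2) ((η 0 1 + η 1 0)/2)
  have H02 := step1 ((ξ 0 2 + ξ 2 0)/2) ((η 0 2 + η 2 0)/2)
  have H12 := step1 ((ξ 1 2 + ξ 2 1)/2) ((η 1 2 + η 2 1)/2)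
  have A01 := step2 ((ξ 0 1 - ξ 1 0)/2) ((η 0 1 - η 1 0)/2)
  have A02 := step2 ((ξ 0 2 - ξ 2 0)/2) ((η 0 2 - η 2 0)/2)
  have A12 := step2 ((ξ 1 2 - ξ 2 1)/2) ((η 1 2 - η 2 1)/2)
  have HT := step3 (ξ 0 0 + ξ 1 1 + ξ 2 2) (η 0 0 + η 1 1 + η 2 2)
  simp only [energyDensity, Fin.sum_univ_three]
  linarith [H00, H11, H22, H01, H02, H12, A01, A02, A12, HT]
end

section
/- Let α, β, γ, δ, ε, κ (=ϰ), λ, μ, ν be real numbers with 3λ+2μ > 0. Then the following two systems of inequalities are equivalent. System (I): μ>0, α>0, γ>0, ε>0, λ+2μ>0, μγ−κ²>0, αε−ν²>0, (λ+μ)(β+γ)−(δ+κ)²>0, (3λ+2μ)(3β+2γ)−(3δ+2κ)²>0, (μ+α)(γ+ε)−(κ+ν)²>0, (λ+2μ)(β+2γ)−(δ+2κ)²>0, μ[(λ+μ)(β+γ)−(δ+κ)²]+(λ+μ)(μγ−κ²)>0, and μ[(3λ+2μ)(3β+2γ)−(3δ+2κ)²]+(3λ+2μ)(μγ−κ²)>0.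 System (II): μ>0, α>0, γ>0, ε>0, 3λ+2μ>0, μγ−κ²>0, αε−ν²>0, (μ+α)(γ+ε)−(κ+ν)²>0, and (3λ+2μ)(3β+2γ)−(3δ+2κ)²>0. -/
/-- Determinant of the sum of two positive-definite symmetric 2×2 matrices is positive. -/
lemma det_add_pos (a1 b1 c1 a2 b2 c2 : ℝ) (ha1 : 0 < a1) (ha2 : 0 < a2)
    (hd1 : 0 < a1 * c1 - b1 ^ 2) (hd2 : 0 < a2 * c2 - b2 ^ 2) :
    0 < (a1 + a2) * (c1 + c2) - (b1 + b2) ^ 2 := by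
  nlinarith [sq_nonneg (a1 * b2 - a2 * b1), mul_pos ha1 ha2, mul_pos ha1 hd2,
    mul_pos ha2 hd1, sq_nonneg (b1 - b2), sq_nonneg (b1 + b2)]

/-- Under the natural condition `3λ + 2μ > 0`, the full system (I) of
necessary and sufficient conditions for positive definiteness of the
hemitropic potential energy density is equivalent to the shorter system (II). -/
theorem hemitropic_conditions_equiv (α β γ δ ε κ lam μ ν : ℝ)
    (h : 0 < 3 * lam + 2 * μ) :
    (0 < μ ∧ 0 < α ∧ 0 < γ ∧ 0 < ε ∧ 0 < lam + 2 * μ ∧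
      0 < μ * γ - κ ^ 2 ∧ 0 < α * ε - ν ^ 2 ∧
      0 < (lam + μ) * (β + γ) - (δ + κ) ^ 2 ∧
      0 < (3 * lam + 2 * μ) * (3 * β + 2 * γ) - (3 * δ + 2 * κ) ^ 2 ∧
      0 < (μ + α) * (γ + ε) - (κ + ν) ^ 2 ∧
      0 < (lam + 2 * μ) * (β + 2 * γ) - (δ + 2 * κ) ^ 2 ∧
      0 < μ * ((lam + μ) * (β + γ) - (δ + κ) ^ 2) + (lam + μ) * (μ * γ - κ ^ 2) ∧
      0 < μ * ((3 * lam + 2 * μ) * (3 * β + 2 * γ) - (3 * δ + 2 * κ) ^ 2)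
            + (3 * lam + 2 * μ) * (μ * γ - κ ^ 2))
    ↔
    (0 < μ ∧ 0 < α ∧ 0 < γ ∧ 0 < ε ∧ 0 < 3 * lam + 2 * μ ∧
      0 < μ * γ - κ ^ 2 ∧ 0 < α * ε - ν ^ 2 ∧
      0 < (μ + α) * (γ + ε) - (κ + ν) ^ 2 ∧
      0 < (3 * lam + 2 * μ) * (3 * β + 2 * γ) - (3 * δ + 2 * κ) ^ 2) := by
  constructor
  · rintro ⟨h1, h2, h3, h4, h5, h6, h7, h8, h9, h10, h11, h12, h13⟩
    exact ⟨h1, h2, h3, h4, h, h6, h7, h10, h9⟩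
  · rintro ⟨h1, h2, h3, h4, h5, h6, h7, h8, h9⟩
    have hlm : 0 < lam + μ := by linarith
    have hl2m : 0 < lam + 2 * μ := by linarith
    -- det of (3λ+2μ, 3δ+2κ, 3β+2γ) + (μ, κ, γ)
    have d1 := det_add_pos (3 * lam + 2 * μ) (3 * δ + 2 * κ) (3 * β + 2 * γ) μ κ γ h h1 h9 h6
    -- det of (3λ+2μ, 3δ+2κ, 3β+2γ) + 4·(μ, κ, γ)
    have h6' : 0 < (4 * μ) * (4 * γ) - (4 * κ) ^ 2 := by nlinarith
    have d2 := det_add_pos (3 * lam + 2 * μ) (3 * δ + 2 * κ) (3 * β + 2 * γ)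
      (4 * μ) (4 * κ) (4 * γ) h (by linarith) h9 h6'
    have e1 : 0 < (lam + μ) * (β + γ) - (δ + κ) ^ 2 := by nlinarith
    have e2 : 0 < (lam + 2 * μ) * (β + 2 * γ) - (δ + 2 * κ) ^ 2 := by nlinarith
    refine ⟨h1, h2, h3, h4, hl2m, h6, h7, e1, h9, h8, e2, ?_, ?_⟩
    · positivity
    · positivity
end

section
/- Let t, u, φ₀ be vectors in Euclidean space ℝ³ and g ≥ 0 a real number with ‖t‖ ≤ g. Assume: (a) if ‖t‖ < g then u = φ₀; (b) if ‖t‖ = g then there exist real numbers λ₁ ≥ 0 and λ₂ ≥ 0, not both zero, with λ₁ u = −λ₂ t + λ₁ φ₀. Then for every vector h ∈ ℝ³: ⟨t, h − u⟩ + g(‖h − φ₀‖ − ‖u − φ₀‖) ≥ 0. -/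
open scoped RealInnerProductSpace

lemma key_aux (t x : EuclideanSpace ℝ (Fin 3)) (g : ℝ) (htg : ‖t‖ ≤ g) :
    ⟪t, x⟫ + g * ‖x‖ ≥ 0 := by
  have h1 : |⟪t, x⟫| ≤ ‖t‖ * ‖x‖ := abs_real_inner_le_norm t x
  have h2 : ‖t‖ * ‖x‖ ≤ g * ‖x‖ := mul_le_mul_of_nonneg_right htg (norm_nonneg x)
  nlinarith [abs_le.mp h1, norm_nonneg x]

/-- The Tresca friction law implies the pointwise variational inequality (3.23):
if `‖t‖ ≤ g`, `u = φ₀` whenever `‖t‖ < g`, and in the saturated case `‖t‖ = g`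
there are nonnegative `λ₁, λ₂`, not both zero, with `λ₁ u = −λ₂ t + λ₁ φ₀`,
then `⟨t, h − u⟩ + g(‖h − φ₀‖ − ‖u − φ₀‖) ≥ 0` for every `h`. -/
theorem tresca_pointwise_inequality
    (t u φ₀ : EuclideanSpace ℝ (Fin 3)) (g : ℝ) (hg : 0 ≤ g)
    (htg : ‖t‖ ≤ g)
    (ha : ‖t‖ < g → u = φ₀)
    (hb : ‖t‖ = g → ∃ lam₁ lam₂ : ℝ, 0 ≤ lam₁ ∧ 0 ≤ lam₂ ∧
      ¬ (lam₁ = 0 ∧ lam₂ = 0) ∧ lam₁ • u = -(lam₂ • t) + lam₁ • φ₀) :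
    ∀ h : EuclideanSpace ℝ (Fin 3),
      ⟪t, h - u⟫ + g * (‖h - φ₀‖ - ‖u - φ₀‖) ≥ 0 := by
  intro h
  rcases lt_or_eq_of_le htg with hlt | heq
  · have hu := ha hlt
    subst hu
    simpa using key_aux t (h - u) g htg
  · obtain ⟨l₁, l₂, hl₁, hl₂, hne, heqn⟩ := hb heq
    rcases eq_or_lt_of_le hl₁ with h₁0 | h₁pos
    · -- l₁ = 0, so l₂ ≠ 0 and l₂ • t = 0 ⇒ t = 0, g = 0
      have hl₂ne : l₂ ≠ 0 := fun h2 => hne ⟨h₁0.symm, h2⟩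
      have ht0 : t = 0 := by
        have : l₂ • t = 0 := by
          have := heqn
          rw [← h₁0] at this
          simpa using this.symm
        exact (smul_eq_zero.mp this).resolve_left hl₂ne
      have hg0 : g = 0 := by rw [← heq, ht0, norm_zero]
      simp [ht0, hg0]
    · -- l₁ > 0: u - φ₀ = -(l₂/l₁) • t
      set c : ℝ := l₂ / l₁ with hc
      have hcnn : 0 ≤ c := div_nonneg hl₂ (le_of_lt h₁pos)
      have hudiff : u - φ₀ = -(c • t) := by
        have : l₁ • (u - φ₀) = -(l₂ • t) := by
          rw [smul_sub, heqn]; abel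
        have h2 : u - φ₀ = l₁⁻¹ • -(l₂ • t) := by
          rw [← this, inv_smul_smul₀ (ne_of_gt h₁pos)]
        rw [h2, hc]
        rw [smul_neg, smul_smul, div_eq_inv_mul]
      have hnorm : ‖u - φ₀‖ = c * g := by
        rw [hudiff, norm_neg, norm_smul, Real.norm_eq_abs, abs_of_nonneg hcnn, heq]
      have hinner : ⟪t, h - u⟫ = ⟪t, h - φ₀⟫ + c * g ^ 2 := by
        have : h - u = (h - φ₀) - (u - φ₀) := by abel
        rw [this, inner_sub_right, hudiff, inner_neg_right, real_inner_smul_right,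
          real_inner_self_eq_norm_sq, heq]
        ring
      have := key_aux t (h - φ₀) g htg
      rw [hinner, hnorm]
      nlinarith
end

section
/- Let H be a real inner product space, K ⊆ H a linear subspace, A : H → H a continuous linear map, and c > 0 with ⟨Aw, w⟩ ≥ c‖w‖² for all w ∈ K. Let j, j̃ : H → ℝ be functions, ℓ, ℓ̃ : H → ℝ continuous linear functionals, and K₀ ≥ 0, K₁ ≥ 0 constants such that |(j(x) − j̃(x)) − (j(y) − j̃(y))| ≤ K₀‖x − y‖ for all x, y ∈ K and |ℓ(w) − ℓ̃(w)| ≤ K₁‖w‖ for all w ∈ K. If h₀ ∈ K satisfies ⟨A h₀, k − h₀⟩ + j(k) − j(h₀) ≥ ℓ(k − h₀) for all k ∈ K, and h̃₀ ∈ K satisfies ⟨A h̃₀, k − h̃₀⟩ + j̃(k) − j̃(h̃₀) ≥ ℓ̃(k − h̃₀) for all k ∈ K, then ‖h₀ − h̃₀‖ ≤ (K₀ + K₁)/c. -/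
open scoped RealInnerProductSpace

/-- Abstract Lipschitz continuous dependence of solutions of the variational
inequality on the data (Section 4.3): if the friction functionals differ by a
`K₀`-Lipschitz amount on `K` and the linear functionals differ by at most
`K₁‖·‖` on `K`, then any two corresponding solutions satisfy
`‖h₀ − h̃₀‖ ≤ (K₀ + K₁)/c`. -/
theorem vi_lipschitz_dependence_on_data
    {H : Type*} [NormedAddCommGroup H] [InnerProductSpace ℝ H]
    (K : Submodule ℝ H)
    (A : H →L[ℝ] H)
    (c : ℝ) (hc : 0 < c) (hcoer : ∀ w ∈ K, ⟪A w, w⟫ ≥ c * ‖w‖ ^ 2)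
    (j j' : H → ℝ) (ℓ ℓ' : H →L[ℝ] ℝ)
    (K₀ K₁ : ℝ) (hK₀ : 0 ≤ K₀) (hK₁ : 0 ≤ K₁)
    (hj : ∀ x ∈ K, ∀ y ∈ K, |(j x - j' x) - (j y - j' y)| ≤ K₀ * ‖x - y‖)
    (hl : ∀ w ∈ K, |ℓ w - ℓ' w| ≤ K₁ * ‖w‖)
    (h₀ h₀' : H) (h₀K : h₀ ∈ K) (h₀'K : h₀' ∈ K)
    (H₀ : ∀ k ∈ K, ⟪A h₀, k - h₀⟫ + j k - j h₀ ≥ ℓ (k - h₀))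
    (H₀' : ∀ k ∈ K, ⟪A h₀', k - h₀'⟫ + j' k - j' h₀' ≥ ℓ' (k - h₀')) :
    ‖h₀ - h₀'‖ ≤ (K₀ + K₁) / c := by
  set w := h₀ - h₀' with hw
  have hwK : w ∈ K := K.sub_mem h₀K h₀'K
  have e1 := H₀ h₀' h₀'K
  have e2 := H₀' h₀ h₀K
  have hAw : ⟪A w, w⟫ = ⟪A h₀, h₀ - h₀'⟫ + ⟪A h₀', h₀' - h₀⟫ := by
    simp only [hw, map_sub, inner_sub_left, inner_sub_right]
    ring
  have hjb := hj h₀' h₀'K h₀ h₀K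
  have hlb := hl w hwK
  have key : ⟪A w, w⟫ ≤ (K₀ + K₁) * ‖w‖ := by
    have h1 : ⟪A h₀, h₀ - h₀'⟫ ≤ j h₀' - j h₀ - ℓ (h₀' - h₀) := by
      have : ⟪A h₀, h₀' - h₀⟫ + j h₀' - j h₀ ≥ ℓ (h₀' - h₀) := e1
      have hsym : ⟪A h₀, h₀ - h₀'⟫ = -⟪A h₀, h₀' - h₀⟫ := by
        rw [inner_sub_right, inner_sub_right]; ring
      linarith
    have h2 : ⟪A h₀', h₀' - h₀⟫ ≤ j' h₀ - j' h₀' - ℓ' (h₀ - h₀') := by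
      have : ⟪A h₀', h₀ - h₀'⟫ + j' h₀ - j' h₀' ≥ ℓ' (h₀ - h₀') := e2
      have hsym : ⟪A h₀', h₀' - h₀⟫ = -⟪A h₀', h₀ - h₀'⟫ := by
        rw [inner_sub_right, inner_sub_right]; ring
      linarith
    have hln : ℓ (h₀' - h₀) = - ℓ w := by rw [hw]; simp [map_sub]
    have hjb' : (j h₀' - j' h₀') - (j h₀ - j' h₀) ≤ K₀ * ‖h₀' - h₀‖ :=
      le_trans (le_abs_self _) hjb
    have hnorm : ‖h₀' - h₀‖ = ‖w‖ := by rw [hw, norm_sub_rev]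
    have hlb' : ℓ w - ℓ' w ≤ K₁ * ‖w‖ := le_trans (le_abs_self _) hlb
    have hlw : ℓ' (h₀ - h₀') = ℓ' w := by rw [hw]
    rw [hAw]
    calc ⟪A h₀, h₀ - h₀'⟫ + ⟪A h₀', h₀' - h₀⟫
        ≤ (j h₀' - j h₀ - ℓ (h₀' - h₀)) + (j' h₀ - j' h₀' - ℓ' (h₀ - h₀')) :=
          add_le_add h1 h2
      _ = ((j h₀' - j' h₀') - (j h₀ - j' h₀)) + (ℓ w - ℓ' w) := by
          rw [hln, hlw]; ring
      _ ≤ K₀ * ‖h₀' - h₀‖ + K₁ * ‖w‖ := add_le_add hjb' hlb'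
      _ = (K₀ + K₁) * ‖w‖ := by rw [hnorm]; ring
  have hcoerw := hcoer w hwK
  have : c * ‖w‖ ^ 2 ≤ (K₀ + K₁) * ‖w‖ := le_trans hcoerw key
  rcases eq_or_lt_of_le (norm_nonneg w) with h0 | h0
  · rw [← h0]
    positivity
  · rw [le_div_iff₀ hc]
    nlinarith [this]
end

section
/- Let H be a real inner product space, A : H → H a continuous linear map that is symmetric (⟨Ax, y⟩ = ⟨x, Ay⟩ for all x, y), j : H → ℝ a function, ℓ : H → ℝ a linear functional, and p : H → ℝ a function satisfying p(−w) = p(w) and |j(x) − j(y)| ≤ p(x − y) for all x, y, w ∈ H. Suppose h₀ ∈ H satisfies the variational inequality ⟨A h₀, h − h₀⟩ + j(h) − j(h₀) ≥ ℓ(h − h₀) for all h ∈ H. Then for every χ ∈ H with Aχ = 0 one has |ℓ(χ)| ≤ p(χ). -/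
open scoped RealInnerProductSpace

/-- Abstract form of the necessary solvability condition (5.9) of the
semicoercive problem: if `h₀` solves the variational inequality over the whole
space, then for every `χ` in the kernel of `A` one has `|ℓ(χ)| ≤ p(χ)`. -/
theorem vi_necessary_condition_on_kernel
    {H : Type*} [NormedAddCommGroup H] [InnerProductSpace ℝ H]
    (A : H →L[ℝ] H)
    (hAsym : ∀ x y : H, ⟪A x, y⟫ = ⟪x, A y⟫)
    (j : H → ℝ) (ℓ : H →ₗ[ℝ] ℝ) (p : H → ℝ)
    (hpsymm : ∀ w : H, p (-w) = p w)
    (hjp : ∀ x y : H, |j x - j y| ≤ p (x - y))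
    (h₀ : H)
    (hsol : ∀ h : H, ⟪A h₀, h - h₀⟫ + j h - j h₀ ≥ ℓ (h - h₀)) :
    ∀ χ : H, A χ = 0 → |ℓ χ| ≤ p χ := by
  intro χ hχ
  have key : ∀ c : H, A c = 0 → ℓ c ≤ p c := by
    intro c hc
    have h1 := hsol (h₀ + c)
    simp only [add_sub_cancel_left] at h1
    have h2 : ⟪A h₀, c⟫ = 0 := by
      rw [hAsym, hc, inner_zero_right]
    have h3 : j (h₀ + c) - j h₀ ≤ p c := by
      have := hjp (h₀ + c) h₀
      have := abs_le.mp this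
      simpa using this.2
    linarith
  have hneg : A (-χ) = 0 := by simp [hχ]
  have k1 := key χ hχ
  have k2 := key (-χ) hneg
  rw [map_neg, hpsymm] at k2
  exact abs_le.mpr ⟨by linarith, k1⟩
end

section
/- Let H be a real Hilbert space, Λ ⊆ H a closed subspace with orthogonal projection P : H → Λ, and A : H → H a continuous linear map that is symmetric (⟨Ax, y⟩ = ⟨x, Ay⟩), vanishes on Λ (Aχ = 0 for all χ ∈ Λ), and satisfies ⟨Ah, h⟩ ≥ c‖h − Ph‖² for all h ∈ H with some c > 0. Let p : H → ℝ be a continuous seminorm (subadditive, p(t·x) = |t|·p(x)), φ₀ ∈ H, ℓ : H → ℝ a continuous linear functional, and M > 0 a constant with p(χ) − |ℓ(χ)| ≥ M‖χ‖ for all χ ∈ Λ. Define J(h) := ½⟨A h, h⟩ + p(h − φ₀) − ℓ(h). Then J is coercive: J(h) → +∞ as ‖h‖ → +∞. -/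
open scoped RealInnerProductSpace

/-- Abstract core of the existence proof in the semicoercive case
(Theorem 5.1): under the semicoercivity estimate `⟨Ah,h⟩ ≥ c‖h − Ph‖²`
(`P` the orthogonal projection onto the closed subspace `Λ`, on which `A`
vanishes) and the strengthened compatibility condition
`p(χ) − |ℓ(χ)| ≥ M‖χ‖` on `Λ`, the functional
`J(h) = ½⟨Ah, h⟩ + p(h − φ₀) − ℓ(h)` is coercive. -/
theorem semicoercive_functional_coercive
    {H : Type*} [NormedAddCommGroup H] [InnerProductSpace ℝ H] [CompleteSpace H]
    (Λ : Submodule ℝ H) (hΛ : IsClosed (Λ : Set H))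
    (P : H →L[ℝ] H)
    (hPmem : ∀ h : H, P h ∈ Λ)
    (hPorth : ∀ h : H, ∀ χ ∈ Λ, ⟪h - P h, χ⟫ = 0)
    (A : H →L[ℝ] H)
    (hAsym : ∀ x y : H, ⟪A x, y⟫ = ⟪x, A y⟫)
    (hAker : ∀ χ ∈ Λ, A χ = 0)
    (c : ℝ) (hc : 0 < c)
    (hAcoer : ∀ h : H, ⟪A h, h⟫ ≥ c * ‖h - P h‖ ^ 2)
    (p : H → ℝ) (hpcont : Continuous p)
    (hpsub : ∀ x y : H, p (x + y) ≤ p x + p y)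
    (hphom : ∀ (t : ℝ) (x : H), p (t • x) = |t| * p x)
    (φ₀ : H) (ℓ : H →L[ℝ] ℝ)
    (M : ℝ) (hM : 0 < M)
    (hcompat : ∀ χ ∈ Λ, p χ - |ℓ χ| ≥ M * ‖χ‖) :
    ∀ C : ℝ, ∃ R : ℝ, ∀ h : H, ‖h‖ ≥ R →
      (1 / 2) * ⟪A h, h⟫ + p (h - φ₀) - ℓ h ≥ C := by
  -- p vanishes at 0
  have h0 : p 0 = 0 := by simpa using hphom 0 0
  -- linear bound on the seminorm from continuity at 0
  obtain ⟨δ, hδ, hball⟩ : ∃ δ > 0, ∀ x : H, ‖x‖ < δ → p x < 1 := by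
    obtain ⟨δ, hδ, hd⟩ :=
      Metric.continuousAt_iff.mp (hpcont.continuousAt (x := (0 : H))) 1 one_pos
    refine ⟨δ, hδ, fun x hx => ?_⟩
    have := hd (show dist x 0 < δ by simpa using hx)
    rw [h0, Real.dist_eq, sub_zero] at this
    exact lt_of_le_of_lt (le_abs_self _) this
  set K : ℝ := 2 / δ with hKdef
  have hK : 0 < K := by positivity
  have hpK : ∀ x : H, p x ≤ K * ‖x‖ := by
    intro x
    rcases eq_or_ne x 0 with rfl | hx
    · simp [h0]
    · have hx' : 0 < ‖x‖ := norm_pos_iff.mpr hx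
      set t : ℝ := δ / (2 * ‖x‖) with htdef
      have ht : 0 < t := by positivity
      have hnorm : ‖t • x‖ < δ := by
        rw [norm_smul, Real.norm_eq_abs, abs_of_pos ht]
        have ht2 : t * ‖x‖ = δ / 2 := by rw [htdef]; field_simp
        rw [ht2]; linarith
      have hlt := hball _ hnorm
      rw [hphom, abs_of_pos ht] at hlt
      have h1t : t * (K * ‖x‖) = 1 := by
        rw [htdef, hKdef]; field_simp
      rw [← h1t] at hlt
      exact le_of_lt (lt_of_mul_lt_mul_left hlt ht.le)
  intro C
  set E : ℝ := (K + ‖ℓ‖ + M) ^ 2 / (2 * c) with hEdef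
  set D : ℝ := E + K * ‖φ₀‖ with hDdef
  refine ⟨(C + D) / M, fun h hh => ?_⟩
  set q : H := h - P h with hq
  set χ : H := P h with hχ
  -- quadratic lower bound
  have f1 : (1 / 2) * ⟪A h, h⟫ ≥ (c / 2) * ‖q‖ ^ 2 := by
    have := hAcoer h
    rw [← hq] at this
    linarith
  -- seminorm lower bound
  have f2 : p (h - φ₀) ≥ p χ - K * ‖q‖ - K * ‖φ₀‖ := by
    have hsplit : χ = (h - φ₀) + (φ₀ - q) := by rw [hχ, hq]; abel
    have h1 : p χ ≤ p (h - φ₀) + p (φ₀ - q) := by rw [hsplit]; exact hpsub _ _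
    have h2 : p (φ₀ - q) ≤ K * ‖φ₀ - q‖ := hpK _
    have h3 : ‖φ₀ - q‖ ≤ ‖φ₀‖ + ‖q‖ := norm_sub_le _ _
    have h4 := mul_le_mul_of_nonneg_left h3 hK.le
    rw [mul_add] at h4
    linarith
  -- linear functional bound
  have hdecomp : h = χ + q := by rw [hχ, hq]; abel
  have f3 : ℓ h = ℓ χ + ℓ q := by rw [hdecomp]; exact map_add ℓ _ _
  have f3' : ℓ q ≤ ‖ℓ‖ * ‖q‖ := le_trans (le_abs_self _) (ℓ.le_opNorm q)
  have f3'' : ℓ χ ≤ |ℓ χ| := le_abs_self _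
  -- compatibility on Λ
  have f4 : p χ - |ℓ χ| ≥ M * ‖χ‖ := hcompat _ (hPmem h)
  -- triangle inequality
  have f5 : ‖h‖ ≤ ‖q‖ + ‖χ‖ := by
    calc ‖h‖ = ‖χ + q‖ := by rw [← hdecomp]
    _ ≤ ‖χ‖ + ‖q‖ := norm_add_le _ _
    _ = ‖q‖ + ‖χ‖ := by ring
  -- complete the square: quadratic dominates linear up to a constant
  have f6 : (c / 2) * ‖q‖ ^ 2 - K * ‖q‖ - ‖ℓ‖ * ‖q‖ ≥ M * ‖q‖ - E := by
    have hiden : (c / 2) * ‖q‖ ^ 2 - (K + ‖ℓ‖ + M) * ‖q‖ + E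
        = (c * ‖q‖ - (K + ‖ℓ‖ + M)) ^ 2 / (2 * c) := by
      rw [hEdef]; field_simp; ring
    have hpos : 0 ≤ (c * ‖q‖ - (K + ‖ℓ‖ + M)) ^ 2 / (2 * c) := by positivity
    nlinarith [hiden, hpos]
  have f7 : M * ‖h‖ ≥ C + D := by
    have := mul_le_mul_of_nonneg_left hh hM.le
    rwa [mul_div_cancel₀ _ (ne_of_gt hM)] at this
  have f8 : M * ‖h‖ ≤ M * ‖q‖ + M * ‖χ‖ := by
    have := mul_le_mul_of_nonneg_left f5 hM.le
    rwa [mul_add] at this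
  linarith [f1, f2, f3, f3', f3'', f4, f6, f7, f8]
end

section
/- Let H and H₀ be real Hilbert spaces and ι : H → H₀ an injective compact linear operator. Let A : H → H be a continuous linear map that is symmetric (⟨Ax, y⟩ = ⟨x, Ay⟩) and nonnegative (⟨Ah, h⟩ ≥ 0), and suppose there are constants c′ > 0 and c″ > 0 such that ⟨Ah, h⟩ ≥ c′‖h‖²_H − c″‖ι h‖²_{H₀} for all h ∈ H. Then the kernel Λ := ker A is a finite-dimensional subspace of H, and there exists c > 0 such that ⟨Ah, h⟩ ≥ c‖h − Ph‖²_H for all h ∈ H, where P is the orthogonal projection of H onto Λ. -/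
/-!
Gårding's inequality and the compactness of `ι` give the key fact: a bounded sequence along
which `⟪A h, h⟫ → 0` has a convergent subsequence. Indeed its `ι`-images have a Cauchy
subsequence, and Gårding applied to differences, with `⟪A (x - y), x - y⟫ ≤ 2⟪A x, x⟫ + 2⟪A y, y⟫`,
makes that subsequence Cauchy in `H`. On the unit ball of `ker A` the form vanishes, so that ball
is compact and `ker A` is finite-dimensional by Riesz. If coercivity failed on `(ker A)ᗮ`, a
normalized sequence there with `⟪A u, u⟫ → 0` would converge to a unit vector `z ∈ (ker A)ᗮ`
with `⟪A z, z⟫ = 0`, hence `A z = 0` by Cauchy–Schwarz for the positive form: impossible.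
By symmetry `⟪A h, h⟫ = ⟪A (h - P h), h - P h⟫`, which concludes.
-/

open scoped RealInnerProductSpace
open Filter Topology

theorem cauchySeq_iff_tendsto_sub_nhds_zero {β E : Type*} [Nonempty β] [SemilatticeSup β]
    [SeminormedAddCommGroup E] {u : β → E} :
    CauchySeq u ↔ Tendsto (fun p : β × β => u p.1 - u p.2) atTop (𝓝 0) := by
  simp only [cauchySeq_iff_tendsto_dist_atTop_0, dist_eq_norm,
    ← tendsto_zero_iff_norm_tendsto_zero]

section Garding

variable {H H₀ : Type*} [NormedAddCommGroup H] [InnerProductSpace ℝ H]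
  [NormedAddCommGroup H₀] [NormedSpace ℝ H₀] {A : H →L[ℝ] H} {ι : H →L[ℝ] H₀} {c' c'' : ℝ}

theorem ContinuousLinearMap.IsPositive.apply_eq_zero_of_inner_self_eq_zero (hA : A.IsPositive)
    {x : H} (hx : ⟪A x, x⟫ = 0) : A x = 0 := by
  have hAx : ∀ y, ⟪A x, y⟫ = 0 := by
    intro y
    -- a nonnegative quadratic in `t` without constant term has no linear term
    have hquad : ∀ t : ℝ, 0 ≤ ⟪A y, y⟫ * (t * t) + 2 * ⟪A x, y⟫ * t + ⟪A x, x⟫ := fun t => by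
      have := hA.inner_nonneg_left (x + t • y)
      simp only [map_add, map_smul, inner_add_left, inner_add_right, real_inner_smul_left,
        real_inner_smul_right, hA.inner_left_eq_inner_right y x, real_inner_comm (A x) y] at this
      linarith
    have hdiscr := discrim_le_zero hquad
    rw [discrim, hx] at hdiscr
    nlinarith [sq_nonneg ⟪A x, y⟫]
  exact inner_self_eq_zero.mp (hAx (A x))

theorem inner_map_sub_self_le (hA : ∀ x, 0 ≤ ⟪A x, x⟫) (x y : H) :
    ⟪A (x - y), x - y⟫ ≤ 2 * ⟪A x, x⟫ + 2 * ⟪A y, y⟫ := by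
  have hparallelogram : ⟪A (x - y), x - y⟫ + ⟪A (x + y), x + y⟫ = 2 * ⟪A x, x⟫ + 2 * ⟪A y, y⟫ := by
    simp only [map_add, map_sub, inner_add_left, inner_add_right, inner_sub_left, inner_sub_right]
    ring
  linarith [hA (x + y)]

theorem inner_map_sub_self_of_apply_eq_zero (hA : (A : H →ₗ[ℝ] H).IsSymmetric) {k : H}
    (hk : A k = 0) (x : H) : ⟪A (x - k), x - k⟫ = ⟪A x, x⟫ := by
  have hxk : ⟪A x, k⟫ = 0 := by simpa [hk] using hA x k
  simp [inner_sub_right, hk, hxk]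

theorem tendsto_zero_of_garding (hc' : 0 < c')
    (hgarding : ∀ h : H, c' * ‖h‖ ^ 2 - c'' * ‖ι h‖ ^ 2 ≤ ⟪A h, h⟫)
    {α : Type*} {l : Filter α} {w : α → H} (hq : Tendsto (fun i => ⟪A (w i), w i⟫) l (𝓝 0))
    (hι : Tendsto (fun i => ι (w i)) l (𝓝 0)) : Tendsto w l (𝓝 0) := by
  have hbound : Tendsto (fun i => (⟪A (w i), w i⟫ + c'' * ‖ι (w i)‖ ^ 2) / c') l (𝓝 0) := by
    simpa using (hq.add ((hι.norm.pow 2).const_mul c'')).div_const c'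
  have hsq : Tendsto (fun i => ‖w i‖ ^ 2) l (𝓝 0) :=
    squeeze_zero (fun _ => by positivity)
      (fun i => by rw [le_div_iff₀ hc']; linarith [hgarding (w i)]) hbound
  rw [tendsto_zero_iff_norm_tendsto_zero]
  simpa [Real.sqrt_sq (norm_nonneg _)] using hsq.sqrt

theorem cauchySeq_of_garding (hA : ∀ x, 0 ≤ ⟪A x, x⟫) (hc' : 0 < c')
    (hgarding : ∀ h : H, c' * ‖h‖ ^ 2 - c'' * ‖ι h‖ ^ 2 ≤ ⟪A h, h⟫) {v : ℕ → H}
    (hιv : CauchySeq fun n => ι (v n)) (hq : Tendsto (fun n => ⟪A (v n), v n⟫) atTop (𝓝 0)) :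
    CauchySeq v := by
  rw [cauchySeq_iff_tendsto_sub_nhds_zero] at hιv ⊢
  refine tendsto_zero_of_garding hc' hgarding ?_ (by simpa only [map_sub] using hιv)
  have hbound : Tendsto (fun p : ℕ × ℕ => 2 * ⟪A (v p.1), v p.1⟫ + 2 * ⟪A (v p.2), v p.2⟫)
      atTop (𝓝 0) := by
    simpa [prod_atTop_atTop_eq] using
      ((hq.comp tendsto_fst).const_mul 2).add ((hq.comp tendsto_snd).const_mul 2)
  exact squeeze_zero (fun _ => hA _) (fun p => inner_map_sub_self_le hA _ _) hbound

theorem exists_tendsto_subseq_of_garding [CompleteSpace H] (hι : IsCompactOperator ι)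
    (hA : ∀ x, 0 ≤ ⟪A x, x⟫) (hc' : 0 < c')
    (hgarding : ∀ h : H, c' * ‖h‖ ^ 2 - c'' * ‖ι h‖ ^ 2 ≤ ⟪A h, h⟫) {v : ℕ → H} {R : ℝ}
    (hv : ∀ n, ‖v n‖ ≤ R) (hq : Tendsto (fun n => ⟪A (v n), v n⟫) atTop (𝓝 0)) :
    ∃ x, ∃ φ : ℕ → ℕ, StrictMono φ ∧ Tendsto (v ∘ φ) atTop (𝓝 x) := by
  obtain ⟨y, -, φ, hφ, hy⟩ :=
    (hι.isCompact_closure_image_closedBall (f := ι.toLinearMap) R).tendsto_subseq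
      (x := fun n => ι (v n)) fun n => subset_closure ⟨v n, mem_closedBall_zero_iff.2 (hv n), rfl⟩
  obtain ⟨x, hx⟩ := cauchySeq_tendsto_of_complete
    (cauchySeq_of_garding hA hc' hgarding hy.cauchySeq (hq.comp hφ.tendsto_atTop))
  exact ⟨x, φ, hφ, hx⟩

theorem finiteDimensional_ker_of_garding [CompleteSpace H] (hι : IsCompactOperator ι)
    (hA : ∀ x, 0 ≤ ⟪A x, x⟫) (hc' : 0 < c')
    (hgarding : ∀ h : H, c' * ‖h‖ ^ 2 - c'' * ‖ι h‖ ^ 2 ≤ ⟪A h, h⟫) :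
    FiniteDimensional ℝ (LinearMap.ker (A : H →ₗ[ℝ] H)) := by
  refine FiniteDimensional.of_isCompact_closedBall₀ ℝ one_pos
    (IsSeqCompact.isCompact fun u hu => ?_)
  have hnorm : ∀ n, ‖(u n : H)‖ ≤ 1 := fun n => by simpa using hu n
  have hker : ∀ n, A (u n) = 0 := fun n => (u n).2
  obtain ⟨x, φ, hφ, hx⟩ :=
    exists_tendsto_subseq_of_garding hι hA hc' hgarding hnorm (by simp [hker])
  have hx_ker : x ∈ LinearMap.ker (A : H →ₗ[ℝ] H) :=
    A.isClosed_ker.mem_of_tendsto hx (.of_forall fun k => (u (φ k)).2)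
  refine ⟨⟨x, hx_ker⟩, ?_, φ, hφ, tendsto_subtype_rng.mpr hx⟩
  simpa using le_of_tendsto' hx.norm fun k => hnorm (φ k)

theorem exists_seq_norm_eq_one_tendsto_of_not_coercive (hA : ∀ x, 0 ≤ ⟪A x, x⟫)
    {S : Submodule ℝ H} (hS : ¬ ∃ c > 0, ∀ x ∈ S, c * ‖x‖ ^ 2 ≤ ⟪A x, x⟫) :
    ∃ u : ℕ → H, (∀ n, u n ∈ S) ∧ (∀ n, ‖u n‖ = 1) ∧
      Tendsto (fun n => ⟪A (u n), u n⟫) atTop (𝓝 0) := by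
  push Not at hS
  choose x hxS hxlt using fun n : ℕ => hS (1 / (n + 1)) (by positivity)
  have hx_ne : ∀ n, x n ≠ 0 := fun n hn => by simpa [hn] using hxlt n
  refine ⟨fun n => ‖x n‖⁻¹ • x n, fun n => S.smul_mem _ (hxS n),
    fun n => norm_smul_inv_norm (hx_ne n), ?_⟩
  refine squeeze_zero (fun n => hA _) (fun n => ?_) tendsto_one_div_add_atTop_nhds_zero_nat
  have hx_pos : 0 < ‖x n‖ := norm_pos_iff.mpr (hx_ne n)
  have hscale : ⟪A (‖x n‖⁻¹ • x n), ‖x n‖⁻¹ • x n⟫ = ⟪A (x n), x n⟫ / ‖x n‖ ^ 2 := by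
    simp only [map_smul, real_inner_smul_left, real_inner_smul_right]
    field_simp
  rw [hscale, div_le_iff₀ (by positivity)]
  exact (hxlt n).le

theorem exists_coercive_on_orthogonal_ker_of_garding [CompleteSpace H] (hι : IsCompactOperator ι)
    (hA : A.IsPositive) (hc' : 0 < c')
    (hgarding : ∀ h : H, c' * ‖h‖ ^ 2 - c'' * ‖ι h‖ ^ 2 ≤ ⟪A h, h⟫) :
    ∃ c > 0, ∀ x ∈ (LinearMap.ker (A : H →ₗ[ℝ] H))ᗮ, c * ‖x‖ ^ 2 ≤ ⟪A x, x⟫ := by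
  by_contra hnot
  obtain ⟨u, hu_orth, hu_norm, hq⟩ :=
    exists_seq_norm_eq_one_tendsto_of_not_coercive hA.inner_nonneg_left hnot
  obtain ⟨z, φ, hφ, hz⟩ := exists_tendsto_subseq_of_garding hι hA.inner_nonneg_left hc' hgarding
    (fun n => (hu_norm n).le) hq
  have hz_orth : z ∈ (LinearMap.ker (A : H →ₗ[ℝ] H))ᗮ :=
    Submodule.isClosed_orthogonal _ |>.mem_of_tendsto hz (.of_forall fun k => hu_orth (φ k))
  have hz_norm : ‖z‖ = 1 :=
    tendsto_nhds_unique hz.norm (by simp only [Function.comp_apply, hu_norm, tendsto_const_nhds])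
  have hz_ker : A z = 0 := hA.apply_eq_zero_of_inner_self_eq_zero <|
    tendsto_nhds_unique (((A.continuous.tendsto z).comp hz).inner hz) (hq.comp hφ.tendsto_atTop)
  have hz_zero : z = 0 :=
    inner_self_eq_zero.mp (Submodule.inner_right_of_mem_orthogonal hz_ker hz_orth)
  simp [hz_zero] at hz_norm

end Garding

theorem garding_implies_coercive_mod_kernel_general
    {H H₀ : Type*} [NormedAddCommGroup H] [InnerProductSpace ℝ H] [CompleteSpace H]
    [NormedAddCommGroup H₀] [InnerProductSpace ℝ H₀]
    (ι : H →L[ℝ] H₀)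
    (hιcomp : IsCompactOperator ι)
    (A : H →L[ℝ] H)
    (hAsym : ∀ x y : H, ⟪A x, y⟫ = ⟪x, A y⟫)
    (hApos : ∀ h : H, 0 ≤ ⟪A h, h⟫)
    (c' c'' : ℝ) (hc' : 0 < c')
    (hgarding : ∀ h : H, ⟪A h, h⟫ ≥ c' * ‖h‖ ^ 2 - c'' * ‖ι h‖ ^ 2) :
    FiniteDimensional ℝ (LinearMap.ker (A : H →ₗ[ℝ] H)) ∧
      ∃ (c : ℝ) (P : H →L[ℝ] H), 0 < c ∧
        (∀ h : H, P h ∈ LinearMap.ker (A : H →ₗ[ℝ] H)) ∧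
        (∀ h : H, ∀ χ ∈ LinearMap.ker (A : H →ₗ[ℝ] H), ⟪h - P h, χ⟫ = 0) ∧
        ∀ h : H, ⟪A h, h⟫ ≥ c * ‖h - P h‖ ^ 2 := by
  have hA : A.IsPositive := ⟨hAsym, hApos⟩
  set Λ := LinearMap.ker (A : H →ₗ[ℝ] H)
  have hfin : FiniteDimensional ℝ Λ := finiteDimensional_ker_of_garding hιcomp hApos hc' hgarding
  obtain ⟨c, hc, hcoer⟩ := exists_coercive_on_orthogonal_ker_of_garding hιcomp hA hc' hgarding
  refine ⟨hfin, c, Λ.starProjection, hc, Λ.starProjection_apply_mem,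
    fun h χ hχ => Submodule.inner_left_of_mem_orthogonal hχ (Λ.sub_starProjection_mem_orthogonal h),
    fun h => ?_⟩
  rw [← inner_map_sub_self_of_apply_eq_zero hA.isSymmetric (Λ.starProjection_apply_mem h)]
  exact hcoer _ (Λ.sub_starProjection_mem_orthogonal h)

/-- Abstract content of Lemma 3.1 (c), (e): a symmetric nonnegative continuous
linear operator `A` on a Hilbert space satisfying a Gårding-type inequality
with respect to an injective compact embedding `ι` has finite-dimensional
kernel `Λ = ker A`, and `⟨Ah, h⟩` dominates a positive multiple of the squared
distance `‖h − Ph‖²` to the kernel, `P` being the orthogonal projection onto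
`Λ`. -/
theorem garding_implies_coercive_mod_kernel
    {H H₀ : Type*} [NormedAddCommGroup H] [InnerProductSpace ℝ H] [CompleteSpace H]
    [NormedAddCommGroup H₀] [InnerProductSpace ℝ H₀] [CompleteSpace H₀]
    (ι : H →L[ℝ] H₀) (hιinj : Function.Injective ι)
    (hιcomp : IsCompactOperator ι)
    (A : H →L[ℝ] H)
    (hAsym : ∀ x y : H, ⟪A x, y⟫ = ⟪x, A y⟫)
    (hApos : ∀ h : H, 0 ≤ ⟪A h, h⟫)
    (c' c'' : ℝ) (hc' : 0 < c') (hc'' : 0 < c'')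
    (hgarding : ∀ h : H, ⟪A h, h⟫ ≥ c' * ‖h‖ ^ 2 - c'' * ‖ι h‖ ^ 2) :
    FiniteDimensional ℝ (LinearMap.ker (A : H →ₗ[ℝ] H)) ∧
      ∃ (c : ℝ) (P : H →L[ℝ] H), 0 < c ∧
        (∀ h : H, P h ∈ LinearMap.ker (A : H →ₗ[ℝ] H)) ∧
        (∀ h : H, ∀ χ ∈ LinearMap.ker (A : H →ₗ[ℝ] H), ⟪h - P h, χ⟫ = 0) ∧
        ∀ h : H, ⟪A h, h⟫ ≥ c * ‖h - P h‖ ^ 2 :=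
  garding_implies_coercive_mod_kernel_general ι hιcomp A hAsym hApos c' c'' hc' hgarding
end
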